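/- Let k > 0 and h_t the one-dimensional Dunkl heat kernel. There exist positive constants c, C such that for every t > 0 and x, y ∈ ℝ with xy ≥ t, c · t^{-1/2} (xy)^{-k} e^{-(x−y)²/(4t)} ≤ h_t(x,y) ≤ C · t^{-1/2} (xy)^{-k} e^{-(x−y)²/(4t)}. -/

import Mathlib

/-!
Up to the constant `(2^(2k+1) Γ(k) √π)⁻¹`, `h_t(x, y)` is `t^(-k-1/2) e^(-(x²+y²)/(4t)) I(l)` with
`l = xy/(2t)` and `I(l) = ∫_{-1}^1 (1-u)^(k-1) (1+u)^k e^(lu) du`. For `l ≥ 1/2` the integral is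
comparable to `l^(-k) e^l`: its mass sits in a window of width `1/l` below `u = 1`, where it behaves
like `∫ v^(k-1) e^(-lv) dv ≈ Γ(k) l^(-k)`. Since `(x² + y²)/(4t) - l = (x - y)²/(4t)`, this yields
the stated two-sided bound.
-/

open Real MeasureTheory intervalIntegral

noncomputable def dunklE (k x y : ℝ) : ℝ :=
  (Real.Gamma (k + 1/2) / (Real.Gamma k * Real.Gamma (1/2))) *
    ∫ u in (-1:ℝ)..1, (1 - u) ^ (k - 1) * (1 + u) ^ k * Real.exp (x * y * u)

/-- The one-dimensional Dunkl heat kernel. -/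
noncomputable def heatH (k t x y : ℝ) : ℝ :=
  ((2:ℝ) ^ (2 * k + 1) * Real.Gamma (k + 1/2))⁻¹ * t ^ (-k - 1/2) *
    Real.exp (-(x ^ 2 + y ^ 2) / (4 * t)) *
    dunklE k (x / Real.sqrt (2 * t)) (y / Real.sqrt (2 * t))

open Set

noncomputable def dunklIntegral (k l : ℝ) : ℝ :=
  ∫ u in (-1:ℝ)..1, (1 - u) ^ (k - 1) * (1 + u) ^ k * exp (l * u)

theorem intervalIntegrable_one_sub_rpow {s : ℝ} (hs : -1 < s) (a b : ℝ) :
    IntervalIntegrable (fun u : ℝ => (1 - u) ^ s) volume a b := by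
  simpa using (intervalIntegrable_rpow' (a := 1 - a) (b := 1 - b) hs).comp_sub_left 1

theorem integral_one_sub_rpow {k : ℝ} (hk : 0 < k) (a : ℝ) :
    ∫ u in a..1, (1 - u) ^ (k - 1) = (1 - a) ^ k / k := by
  rw [integral_comp_sub_left (fun v : ℝ => v ^ (k - 1)) 1, sub_self,
    integral_rpow (Or.inl (by linarith)), sub_add_cancel, zero_rpow hk.ne', sub_zero]

theorem intervalIntegrable_dunklIntegrand {k : ℝ} (hk : 0 < k) (l a b : ℝ) :
    IntervalIntegrable (fun u : ℝ => (1 - u) ^ (k - 1) * (1 + u) ^ k * exp (l * u))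
      volume a b := by
  have hcont : Continuous fun u : ℝ => (1 + u) ^ k * exp (l * u) :=
    ((continuous_rpow_const hk.le).comp (by fun_prop)).mul (by fun_prop)
  simpa only [mul_assoc] using
    (intervalIntegrable_one_sub_rpow (by linarith) a b).mul_continuousOn hcont.continuousOn

theorem dunklIntegrand_nonneg (k l : ℝ) {u : ℝ} (hu : u ∈ Icc (-1 : ℝ) 1) :
    0 ≤ (1 - u) ^ (k - 1) * (1 + u) ^ k * exp (l * u) :=
  mul_nonneg (mul_nonneg (rpow_nonneg (by linarith [hu.2]) _) (rpow_nonneg (by linarith [hu.1]) _))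
    (exp_nonneg _)

theorem integral_rpow_mul_exp_neg_mul_le {s b : ℝ} (hs : 0 < s) (hb : 0 < b) {c : ℝ}
    (hc : 0 ≤ c) : ∫ v in (0:ℝ)..c, v ^ (s - 1) * exp (-(b * v)) ≤ b ^ (-s) * Gamma s := by
  have hint : IntegrableOn (fun v : ℝ => v ^ (s - 1) * exp (-(b * v))) (Ioi 0) := by
    simpa [rpow_one, neg_mul] using
      integrableOn_rpow_mul_exp_neg_mul_rpow (p := 1) (by linarith : -1 < s - 1) one_pos hb
  rw [integral_of_le hc, rpow_neg hb.le, ← inv_rpow hb.le, ← one_div,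
    ← integral_rpow_mul_exp_neg_mul_Ioi hs hb]
  refine setIntegral_mono_set hint ?_ Ioc_subset_Ioi_self.eventuallyLE
  filter_upwards [self_mem_ae_restrict measurableSet_Ioi] with v hv
  exact mul_nonneg (rpow_nonneg (le_of_lt hv) _) (exp_nonneg _)

/-- Bounding `(1 + u) ^ k` by `2 ^ k` leaves an incomplete Gamma integral in `1 - u`. -/
theorem dunklIntegral_le {k l : ℝ} (hk : 0 < k) (hl : 0 < l) :
    dunklIntegral k l ≤ 2 ^ k * Gamma k * (l ^ (-k) * exp l) := by
  calc dunklIntegral k l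
      ≤ ∫ u in (-1:ℝ)..1, (1 - u) ^ (k - 1) * exp (-(l * (1 - u))) * (2 ^ k * exp l) := by
        refine integral_mono_on (by norm_num) (intervalIntegrable_dunklIntegrand hk l _ _)
          ((((intervalIntegrable_one_sub_rpow (by linarith) _ _).mul_continuousOn
            (by fun_prop)).mul_continuousOn continuousOn_const)) fun u hu => ?_
        have hexp : exp (l * u) = exp (-(l * (1 - u))) * exp l := by
          rw [← exp_add]; ring_nf
        rw [hexp]
        have hpow : (1 + u) ^ k ≤ 2 ^ k :=
          rpow_le_rpow (by linarith [hu.1]) (by linarith [hu.2]) hk.le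
        have h0 : 0 ≤ (1 - u) ^ (k - 1) * exp (-(l * (1 - u))) * exp l :=
          mul_nonneg (mul_nonneg (rpow_nonneg (by linarith [hu.2]) _) (exp_nonneg _)) (exp_nonneg _)
        linear_combination mul_le_mul_of_nonneg_left hpow h0
    _ = (∫ v in (0:ℝ)..2, v ^ (k - 1) * exp (-(l * v))) * (2 ^ k * exp l) := by
        rw [intervalIntegral.integral_mul_const,
          integral_comp_sub_left (fun v => v ^ (k - 1) * exp (-(l * v))) 1]
        norm_num
    _ ≤ l ^ (-k) * Gamma k * (2 ^ k * exp l) := by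
        gcongr
        exact integral_rpow_mul_exp_neg_mul_le hk hl (by norm_num)
    _ = 2 ^ k * Gamma k * (l ^ (-k) * exp l) := by ring

/-- On `[1 - 1/(2l), 1]` the exponential is at least `e^(l - 1/2)` and `(1 + u) ^ k ≥ 1`. -/
theorem le_dunklIntegral {k l : ℝ} (hk : 0 < k) (hl : 1 / 2 ≤ l) :
    exp (-2⁻¹) / k * 2 ^ (-k) * (l ^ (-k) * exp l) ≤ dunklIntegral k l := by
  have hl0 : 0 < l := by linarith
  set a : ℝ := 1 - (2 * l)⁻¹ with ha
  have ha_nonneg : 0 ≤ a := by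
    have : (2 * l)⁻¹ ≤ 1 := inv_le_one_of_one_le₀ (by linarith)
    linarith
  have ha_le : a ≤ 1 := by
    have : 0 < (2 * l)⁻¹ := by positivity
    linarith
  calc exp (-2⁻¹) / k * 2 ^ (-k) * (l ^ (-k) * exp l)
      = ∫ u in a..1, (1 - u) ^ (k - 1) * exp (l - 2⁻¹) := by
        rw [intervalIntegral.integral_mul_const, integral_one_sub_rpow hk, sub_sub_cancel, mul_inv,
          mul_rpow (by norm_num) (inv_nonneg.2 hl0.le), inv_rpow (by norm_num), inv_rpow hl0.le,
          ← rpow_neg (by norm_num), ← rpow_neg hl0.le, sub_eq_add_neg, exp_add]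
        ring
    _ ≤ ∫ u in a..1, (1 - u) ^ (k - 1) * (1 + u) ^ k * exp (l * u) := by
        refine integral_mono_on ha_le
          ((intervalIntegrable_one_sub_rpow (by linarith) _ _).mul_continuousOn continuousOn_const)
          (intervalIntegrable_dunklIntegrand hk l _ _) fun u hu => ?_
        have h0 : 0 ≤ (1 - u) ^ (k - 1) := rpow_nonneg (by linarith [hu.2]) _
        have hpow : 1 ≤ (1 + u) ^ k := one_le_rpow (by linarith [hu.1]) hk.le
        have hexp : exp (l - 2⁻¹) ≤ exp (l * u) := by
          gcongr
          have hla : l * a = l - 2⁻¹ := by rw [ha]; field_simp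
          rw [← hla]
          exact mul_le_mul_of_nonneg_left hu.1 hl0.le
        linear_combination mul_le_mul_of_nonneg_left hexp h0 +
          mul_le_mul_of_nonneg_left hpow (mul_nonneg h0 (exp_nonneg (l * u)))
    _ ≤ dunklIntegral k l := by
        refine integral_mono_interval (by linarith) ha_le le_rfl ?_
          (intervalIntegrable_dunklIntegrand hk l _ _)
        filter_upwards [self_mem_ae_restrict measurableSet_Ioc] with u hu
        exact dunklIntegrand_nonneg k l (Ioc_subset_Icc_self hu)

theorem heatH_eq_dunklIntegral {k t : ℝ} (hk : 0 < k + 1 / 2) (ht : 0 ≤ t) (x y : ℝ) :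
    heatH k t x y = (2 ^ (2 * k + 1) * Gamma k * √π)⁻¹ * t ^ (-k - 1 / 2) *
      exp (-(x ^ 2 + y ^ 2) / (4 * t)) * dunklIntegral k (x * y / (2 * t)) := by
  have harg : x / √(2 * t) * (y / √(2 * t)) = x * y / (2 * t) := by
    rw [div_mul_div_comm, mul_self_sqrt (by positivity)]
  have hG : Gamma (k + 1 / 2) ≠ 0 := (Gamma_pos_of_pos hk).ne'
  rw [heatH, dunklE, harg, Gamma_one_half_eq, dunklIntegral]
  generalize Gamma (k + 1 / 2) = G at hG ⊢
  field_simp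

theorem rpow_mul_exp_mul_rpow_mul_exp {k t x y : ℝ} (ht : 0 < t) (hxy : 0 < x * y) :
    t ^ (-k - 1 / 2) * exp (-(x ^ 2 + y ^ 2) / (4 * t)) *
        ((x * y / (2 * t)) ^ (-k) * exp (x * y / (2 * t)))
      = 2 ^ k * (t ^ (-(1:ℝ) / 2) * (x * y) ^ (-k) * exp (-(x - y) ^ 2 / (4 * t))) := by
  have hpow : t ^ (-k - 1 / 2) * (x * y / (2 * t)) ^ (-k)
      = 2 ^ k * (t ^ (-(1:ℝ) / 2) * (x * y) ^ (-k)) := by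
    rw [div_rpow hxy.le (by positivity), rpow_neg (by positivity : (0:ℝ) ≤ 2 * t),
      mul_rpow (by norm_num) ht.le, div_inv_eq_mul,
      show t ^ (-k - 1 / 2) * ((x * y) ^ (-k) * (2 ^ k * t ^ k))
        = t ^ (-k - 1 / 2) * t ^ k * 2 ^ k * (x * y) ^ (-k) by ring, ← rpow_add ht]
    ring_nf
  have hexp : exp (-(x ^ 2 + y ^ 2) / (4 * t)) * exp (x * y / (2 * t))
      = exp (-(x - y) ^ 2 / (4 * t)) := by
    rw [← exp_add]
    congr 1
    field_simp
    ring
  calc _ = (t ^ (-k - 1 / 2) * (x * y / (2 * t)) ^ (-k)) *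
        (exp (-(x ^ 2 + y ^ 2) / (4 * t)) * exp (x * y / (2 * t))) := by ring
    _ = _ := by rw [hpow, hexp]; ring

theorem heatH_bounds_pos_xy (k : ℝ) (hk : 0 < k) :
    ∃ c > (0:ℝ), ∃ C > (0:ℝ), ∀ t > (0:ℝ), ∀ x y : ℝ, t ≤ x * y →
      c * t ^ (-(1:ℝ)/2) * (x * y) ^ (-k) * Real.exp (-(x - y) ^ 2 / (4 * t)) ≤ heatH k t x y ∧
      heatH k t x y ≤ C * t ^ (-(1:ℝ)/2) * (x * y) ^ (-k) * Real.exp (-(x - y) ^ 2 / (4 * t)) := by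
  set κ : ℝ := (2 ^ (2 * k + 1) * Gamma k * √π)⁻¹
  have hκ : 0 < κ := by have := Gamma_pos_of_pos hk; positivity
  refine ⟨κ * 2 ^ k * (exp (-2⁻¹) / k * 2 ^ (-k)), by positivity,
    κ * 2 ^ k * (2 ^ k * Gamma k), by have := Gamma_pos_of_pos hk; positivity,
    fun t ht x y htxy => ?_⟩
  have hxy : 0 < x * y := ht.trans_le htxy
  have hl : 1 / 2 ≤ x * y / (2 * t) := by rw [le_div_iff₀ (by positivity)]; linarith
  have hP : 0 ≤ κ * t ^ (-k - 1 / 2) * exp (-(x ^ 2 + y ^ 2) / (4 * t)) := by positivity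
  have hscale := rpow_mul_exp_mul_rpow_mul_exp (k := k) ht hxy
  rw [heatH_eq_dunklIntegral (by linarith) ht.le]
  constructor
  · calc _ = κ * t ^ (-k - 1 / 2) * exp (-(x ^ 2 + y ^ 2) / (4 * t)) *
          (exp (-2⁻¹) / k * 2 ^ (-k) * ((x * y / (2 * t)) ^ (-k) * exp (x * y / (2 * t)))) := by
          linear_combination (-(κ * (exp (-2⁻¹) / k * 2 ^ (-k)))) * hscale
      _ ≤ _ := mul_le_mul_of_nonneg_left (le_dunklIntegral hk hl) hP
  · calc _ ≤ κ * t ^ (-k - 1 / 2) * exp (-(x ^ 2 + y ^ 2) / (4 * t)) *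
          (2 ^ k * Gamma k * ((x * y / (2 * t)) ^ (-k) * exp (x * y / (2 * t)))) :=
          mul_le_mul_of_nonneg_left (dunklIntegral_le hk (by linarith)) hP
      _ = _ := by linear_combination (κ * (2 ^ k * Gamma k)) * hscale
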